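/- arXiv:1111.3092 — 3 statements merged into one kernel-verified Lean document; each statement's English description precedes it below -/
import Mathlib

section
/- Let k ≥ 1 and let β_1, ..., β_k be positive real numbers with β_1 + β_2 + ... + β_k = π/2. Then cot(β_1/2) + cot(β_2/2) + ... + cot(β_k/2) ≥ k·cot(π/(4k)) ≥ k. -/
open Real Finset

/-!
Since `cot' = -1 / sin²` is increasing on `(0, π/2]`, the cotangent is convex there.
All `βᵢ / 2` lie in `(0, π/4]`, so Jensen's inequality bounds `∑ cot (βᵢ / 2)` below by `k`
times the cotangent of their mean `π / (4k)`; and `cot ≥ 1` on `(0, π/4]` because `tan ≤ 1`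
there.
-/

theorem Real.hasDerivAt_cot {x : ℝ} (hx : sin x ≠ 0) :
    HasDerivAt cot (-1 / sin x ^ 2) x := by
  have h := (hasDerivAt_cos x).div (hasDerivAt_sin x) hx
  rw [show cos / sin = cot from funext fun y => (cot_eq_cos_div_sin y).symm] at h
  rwa [show (-sin x * sin x - cos x * cos x) / sin x ^ 2 = -1 / sin x ^ 2 by
    rw [← sin_sq_add_cos_sq x]; ring] at h

theorem Real.convexOn_cot : ConvexOn ℝ (Set.Ioc 0 (π / 2)) cot := by
  have hsin_pos : ∀ x ∈ Set.Ioc 0 (π / 2), 0 < sin x := fun x hx =>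
    sin_pos_of_pos_of_lt_pi hx.1 (by linarith [hx.2, pi_pos])
  have hderiv : ∀ x ∈ Set.Ioc 0 (π / 2), HasDerivAt cot (-1 / sin x ^ 2) x := fun x hx =>
    hasDerivAt_cot (hsin_pos x hx).ne'
  refine MonotoneOn.convexOn_of_deriv (convex_Ioc _ _)
    (fun x hx => (hderiv x hx).continuousAt.continuousWithinAt) ?_ ?_ <;> rw [interior_Ioc]
  · exact fun x hx =>
      (hderiv x (Set.Ioo_subset_Ioc_self hx)).differentiableAt.differentiableWithinAt
  · intro x hx y hy hxy
    have hx' := Set.Ioo_subset_Ioc_self hx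
    have hy' := Set.Ioo_subset_Ioc_self hy
    rw [(hderiv x hx').deriv, (hderiv y hy').deriv, neg_div, neg_div, neg_le_neg_iff]
    have hsin_le : sin x ≤ sin y :=
      sin_le_sin_of_le_of_le_pi_div_two (by linarith [hx.1, pi_pos]) hy.2.le hxy
    have := hsin_pos x hx'
    gcongr

theorem Real.one_le_cot {x : ℝ} (hx₀ : 0 < x) (hx : x ≤ π / 4) : 1 ≤ cot x := by
  have htan_pos : 0 < tan x := tan_pos_of_pos_of_lt_pi_div_two hx₀ (by linarith [pi_pos])
  have htan_le : tan x ≤ 1 := by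
    rw [← tan_pi_div_four]
    exact strictMonoOn_tan.monotoneOn ⟨by linarith, by linarith⟩
      ⟨by linarith [pi_pos], by linarith [pi_pos]⟩ hx
  rw [← tan_inv_eq_cot]
  exact one_le_inv_iff₀.mpr ⟨htan_pos, htan_le⟩

theorem ConvexOn.card_mul_map_sum_div_card_le {ι : Type*} {s : Set ℝ} {f : ℝ → ℝ}
    (hf : ConvexOn ℝ s f) {t : Finset ι} (ht : t.Nonempty) {p : ι → ℝ}
    (hp : ∀ i ∈ t, p i ∈ s) : #t * f ((∑ i ∈ t, p i) / #t) ≤ ∑ i ∈ t, f (p i) := by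
  have hcard : (0 : ℝ) < #t := by exact_mod_cast ht.card_pos
  have h := hf.map_sum_le (w := fun _ => (#t : ℝ)⁻¹) (fun _ _ => by positivity)
    (by rw [sum_const, nsmul_eq_mul, mul_inv_cancel₀ hcard.ne']) hp
  simp only [smul_eq_mul, ← mul_sum] at h
  rwa [inv_mul_eq_div, inv_mul_eq_div, le_div_iff₀' hcard] at h

/-- If `β 0, …, β (k-1)` are positive reals summing to `π/2`
(with `k ≥ 1`), then `∑ cot (βᵢ/2) ≥ k · cot (π/(4k)) ≥ k`. -/
theorem sum_cot_ge_of_sum_eq_pi_div_two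
    (k : ℕ) (hk : 1 ≤ k) (β : Fin k → ℝ)
    (hpos : ∀ i, 0 < β i) (hsum : ∑ i, β i = π / 2) :
    (k : ℝ) * Real.cot (π / (4 * k)) ≤ ∑ i, Real.cot (β i / 2) ∧
      (k : ℝ) ≤ (k : ℝ) * Real.cot (π / (4 * k)) := by
  have hk' : (1 : ℝ) ≤ k := by exact_mod_cast hk
  have hβ_le : ∀ i, β i ≤ π / 2 := fun i =>
    hsum ▸ single_le_sum (fun j _ => (hpos j).le) (mem_univ i)
  have hmem : ∀ i ∈ univ, β i / 2 ∈ Set.Ioc 0 (π / 2) := fun i _ =>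
    ⟨by linarith [hpos i], by linarith [hβ_le i, pi_pos]⟩
  have hmean : (∑ i, β i / 2) / #(univ : Finset (Fin k)) = π / (4 * k) := by
    rw [← sum_div, hsum, card_univ, Fintype.card_fin]
    ring
  have : Nonempty (Fin k) := ⟨⟨0, hk⟩⟩
  have hjensen := convexOn_cot.card_mul_map_sum_div_card_le univ_nonempty hmem
  rw [hmean, card_univ, Fintype.card_fin] at hjensen
  refine ⟨hjensen, le_mul_of_one_le_right (by positivity) (one_le_cot (by positivity) ?_)⟩
  rw [div_le_div_iff_of_pos_left pi_pos (by positivity) (by norm_num)]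
  linarith
end

section
/- Let k ≥ 3 and let β_1, ..., β_k be real numbers with 0 < β_i ≤ π for each i and β_1 + β_2 + ... + β_k = 2π. Then cot(β_1/2) + cot(β_2/2) + ... + cot(β_k/2) ≥ k·cot(π/k) ≥ k/√3. -/
/-!
The half-angles `βᵢ / 2` lie in `(0, π/2]`, where `cot` is convex (`cot'' = 2 cos / sin³ ≥ 0`),
and their mean is `π / k`; Jensen's inequality gives the first bound. The second holds because
`cot` is decreasing on `(0, π)`, `π / k ≤ π / 3` and `cot (π / 3) = 1 / √3`.
-/

open Real Set

theorem ConvexOn.card_mul_map_mean_le {ι E : Type*} [Fintype ι] [Nonempty ι] [AddCommGroup E]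
    [Module ℝ E] {s : Set E} {f : E → ℝ} (hf : ConvexOn ℝ s f) {p : ι → E} (hp : ∀ i, p i ∈ s) :
    Fintype.card ι * f ((Fintype.card ι : ℝ)⁻¹ • ∑ i, p i) ≤ ∑ i, f (p i) := by
  have hcard : (Fintype.card ι : ℝ) ≠ 0 := by positivity
  have hJ := hf.map_sum_le (t := Finset.univ) (w := fun _ ↦ (Fintype.card ι : ℝ)⁻¹)
    (fun _ _ ↦ by positivity) (by simp [hcard]) (fun i _ ↦ hp i)
  rw [← Finset.smul_sum, ← Finset.smul_sum, smul_eq_mul] at hJ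
  calc (Fintype.card ι : ℝ) * f ((Fintype.card ι : ℝ)⁻¹ • ∑ i, p i)
      ≤ Fintype.card ι * ((Fintype.card ι : ℝ)⁻¹ * ∑ i, f (p i)) := by gcongr
    _ = ∑ i, f (p i) := by field_simp

namespace Real

theorem hasDerivAt_cot_s4 {x : ℝ} (hx : sin x ≠ 0) : HasDerivAt cot (-1 / sin x ^ 2) x := by
  have h := (hasDerivAt_cos x).div (hasDerivAt_sin x) hx
  have hcot : cos / sin = cot := funext fun y ↦ (cot_eq_cos_div_sin y).symm
  rw [hcot] at h
  refine h.congr_deriv ?_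
  field_simp
  linear_combination -sin_sq_add_cos_sq x

theorem hasDerivAt_neg_one_div_sin_sq {x : ℝ} (hx : sin x ≠ 0) :
    HasDerivAt (fun y ↦ -1 / sin y ^ 2) (2 * cos x / sin x ^ 3) x := by
  refine ((hasDerivAt_const x (-1 : ℝ)).div ((hasDerivAt_sin x).pow 2)
    (pow_ne_zero 2 hx)).congr_deriv ?_
  rw [Pi.pow_apply]
  field_simp
  ring

theorem convexOn_cot_s4 : ConvexOn ℝ (Ioc 0 (π / 2)) cot := by
  have hsin : ∀ x ∈ Ioc 0 (π / 2), 0 < sin x := fun x hx ↦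
    sin_pos_of_pos_of_lt_pi hx.1 (by linarith [hx.2, pi_pos])
  refine convexOn_of_hasDerivWithinAt2_nonneg (convex_Ioc 0 (π / 2))
    (fun x hx ↦ (hasDerivAt_cot_s4 (hsin x hx).ne').continuousAt.continuousWithinAt)
    (f' := fun x ↦ -1 / sin x ^ 2) (f'' := fun x ↦ 2 * cos x / sin x ^ 3) ?_ ?_ ?_
    <;> rw [interior_Ioc] <;> intro x hx <;> have hsin_pos := hsin x (Ioo_subset_Ioc_self hx)
  · exact (hasDerivAt_cot_s4 hsin_pos.ne').hasDerivWithinAt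
  · exact (hasDerivAt_neg_one_div_sin_sq hsin_pos.ne').hasDerivWithinAt
  · have hcos : 0 ≤ cos x := cos_nonneg_of_mem_Icc ⟨by linarith [hx.1, pi_pos], hx.2.le⟩
    positivity

theorem antitoneOn_cot : AntitoneOn cot (Ioo 0 π) := by
  have hsin : ∀ x ∈ Ioo 0 π, sin x ≠ 0 := fun x hx ↦ (sin_pos_of_pos_of_lt_pi hx.1 hx.2).ne'
  refine antitoneOn_of_deriv_nonpos (convex_Ioo 0 π)
    (fun x hx ↦ (hasDerivAt_cot_s4 (hsin x hx)).continuousAt.continuousWithinAt)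
    (fun x hx ↦ (hasDerivAt_cot_s4 (hsin x (interior_subset hx))).differentiableAt
      |>.differentiableWithinAt) fun x hx ↦ ?_
  rw [(hasDerivAt_cot_s4 (hsin x (interior_subset hx))).deriv]
  exact div_nonpos_of_nonpos_of_nonneg (by norm_num) (sq_nonneg _)

theorem cot_pi_div_three : cot (π / 3) = 1 / √3 := by
  rw [cot_eq_cos_div_sin, cos_pi_div_three, sin_pi_div_three]
  field_simp

end Real

/-- If `β 0, …, β (k-1)` are reals with `0 < βᵢ ≤ π` summing
to `2π` (with `k ≥ 3`), then `∑ cot (βᵢ/2) ≥ k · cot (π/k) ≥ k/√3`. -/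
theorem sum_cot_ge_of_sum_eq_two_pi
    (k : ℕ) (hk : 3 ≤ k) (β : Fin k → ℝ)
    (hpos : ∀ i, 0 < β i) (hle : ∀ i, β i ≤ π) (hsum : ∑ i, β i = 2 * π) :
    (k : ℝ) * Real.cot (π / k) ≤ ∑ i, Real.cot (β i / 2) ∧
      (k : ℝ) / Real.sqrt 3 ≤ (k : ℝ) * Real.cot (π / k) := by
  have : NeZero k := ⟨by omega⟩
  have hk3 : (3 : ℝ) ≤ k := by exact_mod_cast hk
  constructor
  · have hmean : (k : ℝ)⁻¹ • ∑ i, β i / 2 = π / k := by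
      rw [← Finset.sum_div, hsum, smul_eq_mul]
      field_simp
    have h := convexOn_cot_s4.card_mul_map_mean_le (p := fun i ↦ β i / 2)
      fun i ↦ ⟨by linarith [hpos i], by linarith [hle i]⟩
    rwa [Fintype.card_fin, hmean] at h
  · have hpi_div_k : π / k ≤ π / 3 := div_le_div_of_nonneg_left pi_pos.le (by norm_num) hk3
    rw [div_eq_mul_one_div, ← cot_pi_div_three]
    gcongr
    exact antitoneOn_cot ⟨by positivity, by linarith [pi_pos]⟩
      ⟨by positivity, by linarith [pi_pos]⟩ hpi_div_k
end

section
/- Let T be a normal tiling of Euclidean 3-space with cells P_i containing the closed unit balls B_i. Then 0 < liminf_{L→∞} (4π/3)·card{i : B_i ⊆ C_L} / L³ ≤ limsup_{L→∞} (4π/3)·card{i : B_i ⊆ C_L} / L³ < 1. -/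
open MeasureTheory Metric Filter

noncomputable section

/-- Euclidean 3-space. -/
abbrev E3 := EuclideanSpace ℝ (Fin 3)

/-- The surface area of a set: the 2-dimensional Hausdorff measure of its
topological boundary. -/
def sarea (K : Set E3) : ℝ := (μH[2] (frontier K)).toReal

/-- The axis-parallel cube `[-L/2, L/2]³` centered at the origin. -/
def cube (L : ℝ) : Set E3 := {x : E3 | ∀ j, |x j| ≤ L / 2}

/-- A normal tiling of `ℝ³`: a countable family of compact convex cells `P i`
with nonempty interiors, pairwise disjoint interiors, whose union is all of
space, each containing the closed unit ball `B i` centered at `o i`, and with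
uniformly bounded diameters. -/
structure NormalTiling where
  P : ℕ → Set E3
  o : ℕ → E3
  isCompact : ∀ i, IsCompact (P i)
  convex : ∀ i, Convex ℝ (P i)
  interior_nonempty : ∀ i, (interior (P i)).Nonempty
  disjoint_interiors : ∀ i j, i ≠ j → Disjoint (interior (P i)) (interior (P j))
  iUnion_eq : (⋃ i, P i) = Set.univ
  ball_subset : ∀ i, closedBall (o i) 1 ⊆ P i
  bounded_diam : ∃ D : ℝ, ∀ i, diam (P i) ≤ D

/-- The number of cells of the tiling whose unit ball is contained in `C_L`. -/
def ballCount (T : NormalTiling) (L : ℝ) : ℕ :=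
  Nat.card {i : ℕ | closedBall (T.o i) 1 ⊆ cube L}

/-- The (lower) average surface area of the cells of a normal tiling. -/
def avgSurfaceArea (T : NormalTiling) : ℝ :=
  liminf (fun L : ℝ =>
    (∑ᶠ i ∈ {i : ℕ | closedBall (T.o i) 1 ⊆ cube L}, sarea (T.P i ∩ cube L)) /
      (ballCount T L : ℝ)) atTop

/-- The upper density of the underlying packing of unit balls. -/
def upperDensity (T : NormalTiling) : ℝ :=
  limsup (fun L : ℝ => (4 * Real.pi / 3) * (ballCount T L : ℝ) / L ^ 3) atTop

open scoped ENNReal Real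

/-!
The unit balls of a normal tiling form a packing: their centres are at distance at least 2.

Lower bound: if every cell has diameter at most `D`, the cells meeting `C_{L - 2(D+1)}` have
their ball inside `C_L`, and each cell has volume at most `(4π/3) D³`; so at least
`(L - 2D - 2)³ / ((4π/3) D³)` balls lie in `C_L`.

Upper bound: around each ball of a packing, the part of the concentric ball of radius `101/100`
covered by no ball (its gap) has volume at least `(4π/3)/500`, because a neighbouring ball meets
that shell only close to the midpoint of the two centres, and at most 27 centres are close
enough. A point lies in at most 8 gaps, so the balls inside `C_L` together with their gaps, all
contained in `C_{L + 1/50}`, have total volume at least `1 + 1/4000` times that of the balls.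
-/

theorem abs_sub_apply_le_dist (x y : E3) (j : Fin 3) : |x j - y j| ≤ dist x y := by
  simpa [dist_eq_norm] using PiLp.norm_apply_le (x - y) j

theorem cube_mono {L L' : ℝ} (h : L ≤ L') : cube L ⊆ cube L' :=
  fun _ hx j => (hx j).trans (by linarith)

theorem closedBall_subset_cube {x : E3} {L r : ℝ} (hx : x ∈ cube L) :
    closedBall x r ⊆ cube (L + 2 * r) := by
  intro y hy j
  have hyx := (abs_sub_apply_le_dist y x j).trans (mem_closedBall.mp hy)
  have := abs_sub_abs_le_abs_sub (y j) (x j)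
  linarith [hx j]

theorem mem_cube_of_closedBall_subset {x : E3} {L r : ℝ} (hr : 0 ≤ r)
    (h : closedBall x r ⊆ cube L) : x ∈ cube (L - 2 * r) := by
  intro j
  have hshift (s : ℝ) (hs : |s| = r) : |x j + s| ≤ L / 2 := by
    have hmem : x + EuclideanSpace.single j s ∈ closedBall x r := by
      simp [hs]
    simpa using h hmem j
  have hplus := abs_le.mp (hshift r (abs_of_nonneg hr))
  have hminus := abs_le.mp (hshift (-r) (by rw [abs_neg, abs_of_nonneg hr]))
  rw [abs_le]
  constructor <;> linarith [hplus.1, hplus.2, hminus.1, hminus.2]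

theorem volume_cube (L : ℝ) : volume (cube L) = ENNReal.ofReal L ^ 3 := by
  have hcube : cube L = WithLp.ofLp ⁻¹' Set.Icc (fun _ => -(L / 2)) (fun _ => L / 2) := by
    ext x
    simp [cube, Set.mem_Icc, Pi.le_def, abs_le, forall_and]
  rw [hcube, (PiLp.volume_preserving_ofLp (Fin 3)).measure_preimage
    measurableSet_Icc.nullMeasurableSet, Real.volume_Icc_pi]
  simp

section BoundedOverlap

variable {α ι : Type*} [MeasurableSpace α] [Countable ι] {μ : Measure α} {s : ι → Set α}

theorem encard_mul_le_measure_of_pairwiseDisjoint {A : Set ι} {M : Set α} {v : ℝ≥0∞}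
    (hd : A.PairwiseDisjoint s) (hs : ∀ i ∈ A, MeasurableSet (s i)) (hsM : ∀ i ∈ A, s i ⊆ M)
    (hv : ∀ i ∈ A, v ≤ μ (s i)) : A.encard * v ≤ μ M :=
  calc A.encard * v = ∑' _ : A, v := (ENNReal.tsum_set_const A v).symm
    _ ≤ ∑' i : A, μ (s i) := ENNReal.tsum_le_tsum fun i => hv i i.2
    _ = μ (⋃ i ∈ A, s i) := (measure_biUnion A.to_countable hd hs).symm
    _ ≤ μ M := measure_mono (Set.iUnion₂_subset hsM)

theorem tsum_measure_le_mul_measure_iUnion (hs : ∀ i, MeasurableSet (s i)) {m : ℝ≥0∞}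
    (hm : ∀ x, {i | x ∈ s i}.encard ≤ m) : ∑' i, μ (s i) ≤ m * μ (⋃ i, s i) := by
  have hpoint (x : α) :
      ∑' i, (s i).indicator (1 : α → ℝ≥0∞) x ≤ (⋃ i, s i).indicator (fun _ => m) x := by
    by_cases hx : x ∈ ⋃ i, s i
    · have hsum : ∑' i, (s i).indicator (1 : α → ℝ≥0∞) x = {i | x ∈ s i}.encard := by
        rw [← ENNReal.tsum_set_one, tsum_subtype {i | x ∈ s i} fun _ => (1 : ℝ≥0∞)]
        congr 1 with i
      rw [Set.indicator_of_mem hx, hsum]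
      exact hm x
    · have hzero (i : ι) : (s i).indicator (1 : α → ℝ≥0∞) x = 0 :=
        Set.indicator_of_notMem (fun hxi => hx (Set.mem_iUnion_of_mem i hxi)) _
      simp [hzero]
  calc ∑' i, μ (s i) = ∑' i, ∫⁻ x, (s i).indicator 1 x ∂μ := by
        simp [lintegral_indicator_one (hs _)]
    _ = ∫⁻ x, ∑' i, (s i).indicator (1 : α → ℝ≥0∞) x ∂μ :=
        (lintegral_tsum fun i => (measurable_one.indicator (hs i)).aemeasurable).symm
    _ ≤ ∫⁻ x, (⋃ i, s i).indicator (fun _ => m) x ∂μ := lintegral_mono hpoint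
    _ = m * μ (⋃ i, s i) := lintegral_indicator_const (MeasurableSet.iUnion hs) m

end BoundedOverlap

theorem dist_midpoint_le_of_two_le_dist {V : Type*} [NormedAddCommGroup V]
    [InnerProductSpace ℝ V] {a b x : V} (hab : 2 ≤ dist a b) (hxa : dist x a ≤ 101 / 100)
    (hxb : dist x b ≤ 1) : dist x (midpoint ℝ a b) ≤ 1003 / 10000 := by
  have hapollonius :=
    EuclideanGeometry.dist_sq_add_dist_sq_eq_two_mul_dist_midpoint_sq_add_half_dist_sq x a b
  nlinarith [dist_nonneg (x := x) (y := a), dist_nonneg (x := x) (y := b),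
    dist_nonneg (x := x) (y := midpoint ℝ a b)]

def IsUnitBallPacking {ι : Type*} (o : ι → E3) : Prop :=
  Pairwise fun i j => 2 ≤ dist (o i) (o j)

def packingGap {ι : Type*} (o : ι → E3) (i : ι) : Set E3 :=
  closedBall (o i) (101 / 100) \ ⋃ j, closedBall (o j) 1

namespace IsUnitBallPacking

variable {ι : Type*} {o : ι → E3}

theorem comp_injective {κ : Type*} (h : IsUnitBallPacking o) {f : κ → ι}
    (hf : Function.Injective f) : IsUnitBallPacking (o ∘ f) :=
  fun _ _ hij => h (hf.ne hij)

theorem pairwiseDisjoint_ball (h : IsUnitBallPacking o) (A : Set ι) :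
    A.PairwiseDisjoint fun i => ball (o i) 1 :=
  fun _ _ _ _ hij => ball_disjoint_ball (by linarith [h hij])

theorem closedBall_subset_packingGap_union (h : IsUnitBallPacking o) (i : ι) :
    closedBall (o i) (101 / 100) ⊆ packingGap o i ∪ closedBall (o i) 1 ∪
      ⋃ j ∈ {j | dist (o j) (o i) ≤ 201 / 100},
        closedBall (midpoint ℝ (o i) (o j)) (1003 / 10000) := by
  intro x hx
  by_cases hcov : x ∈ ⋃ j, closedBall (o j) 1
  · obtain ⟨j, hxj⟩ := Set.mem_iUnion.mp hcov
    rw [mem_closedBall] at hx hxj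
    rcases eq_or_ne j i with rfl | hji
    · exact Or.inl (Or.inr hxj)
    · refine Or.inr (Set.mem_biUnion (x := j) ?_ ?_)
      · show dist (o j) (o i) ≤ 201 / 100
        linarith [dist_triangle (o j) x (o i), dist_comm x (o j)]
      · exact dist_midpoint_le_of_two_le_dist (h hji.symm) hx hxj
  · exact Or.inl (Or.inl ⟨hx, hcov⟩)

variable [Countable ι]

theorem encard_mul_le_volume (h : IsUnitBallPacking o) {A : Set ι} {M : Set E3}
    (hA : ∀ i ∈ A, ball (o i) 1 ⊆ M) : A.encard * ENNReal.ofReal (π * 4 / 3) ≤ volume M :=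
  encard_mul_le_measure_of_pairwiseDisjoint (h.pairwiseDisjoint_ball A)
    (fun _ _ => measurableSet_ball) hA (fun _ _ => by simp)

theorem encard_setOf_dist_le_le (h : IsUnitBallPacking o) (x : E3) {R : ℝ} {n : ℕ}
    (hR : 0 ≤ R) (hn : (R + 1) ^ 3 < n + 1) : {i | dist (o i) x ≤ R}.encard ≤ n := by
  have hsub : ∀ i ∈ {i | dist (o i) x ≤ R}, ball (o i) 1 ⊆ ball x (R + 1) := by
    intro i hi y hy
    rw [mem_ball] at hy ⊢
    linarith [dist_triangle y (o i) x, hi.out]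
  have hvol := h.encard_mul_le_volume hsub
  rw [EuclideanSpace.volume_ball_fin_three, ← ENNReal.ofReal_pow (by linarith),
    ENNReal.mul_le_mul_iff_left (by simp [Real.pi_pos]) ENNReal.ofReal_ne_top] at hvol
  have hlt : ENNReal.ofReal ((R + 1) ^ 3) < ((n + 1 : ℕ) : ℝ≥0∞) := by
    rw [← ENNReal.ofReal_natCast]
    exact (ENNReal.ofReal_lt_ofReal_iff (by positivity)).mpr (by exact_mod_cast hn)
  exact ENat.lt_natCast_add_one_iff.mp (by exact_mod_cast hvol.trans_lt hlt)

theorem le_volume_packingGap (h : IsUnitBallPacking o) (i : ι) :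
    ENNReal.ofReal (1 / 500) * ENNReal.ofReal (π * 4 / 3) ≤ volume (packingGap o i) := by
  set κ := ENNReal.ofReal (π * 4 / 3)
  set N := {j | dist (o j) (o i) ≤ 201 / 100}
  have hN : N.encard ≤ 27 := h.encard_setOf_dist_le_le (o i) (by norm_num) (by norm_num)
  have hlens : volume (⋃ j ∈ N, closedBall (midpoint ℝ (o i) (o j)) (1003 / 10000)) ≤
      27 * (ENNReal.ofReal (1003 / 10000) ^ 3 * κ) :=
    calc _ ≤ ∑' j : N, volume (closedBall (midpoint ℝ (o i) (o j)) (1003 / 10000)) :=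
          measure_biUnion_le _ N.to_countable _
      _ = N.encard * (ENNReal.ofReal (1003 / 10000) ^ 3 * κ) := by
          simp only [EuclideanSpace.volume_closedBall_fin_three, ENNReal.tsum_set_const, κ]
      _ ≤ 27 * (ENNReal.ofReal (1003 / 10000) ^ 3 * κ) := by
          gcongr
          exact_mod_cast hN
  have hcover : ENNReal.ofReal (101 / 100) ^ 3 * κ ≤
      volume (packingGap o i) + κ + 27 * (ENNReal.ofReal (1003 / 10000) ^ 3 * κ) := by
    rw [← EuclideanSpace.volume_closedBall_fin_three (o i)]
    refine (measure_mono (h.closedBall_subset_packingGap_union i)).trans ?_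
    refine (measure_union_le _ _).trans (add_le_add ((measure_union_le _ _).trans ?_) hlens)
    simp [κ]
  have hrest : κ + 27 * (ENNReal.ofReal (1003 / 10000) ^ 3 * κ) =
      ENNReal.ofReal (1 + 27 * (1003 / 10000) ^ 3) * κ := by
    rw [ENNReal.ofReal_add (by norm_num) (by norm_num), ENNReal.ofReal_mul (by norm_num),
      ENNReal.ofReal_pow (by norm_num)]
    simp only [ENNReal.ofReal_one, ENNReal.ofReal_ofNat]
    ring
  refine ENNReal.le_of_add_le_add_right
    (a := ENNReal.ofReal (1 + 27 * (1003 / 10000) ^ 3) * κ) (by finiteness) ?_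
  calc _ = ENNReal.ofReal (1 / 500 + (1 + 27 * (1003 / 10000) ^ 3)) * κ := by
        rw [← add_mul, ← ENNReal.ofReal_add (by norm_num) (by norm_num)]
    _ ≤ ENNReal.ofReal (101 / 100) ^ 3 * κ := by
        rw [← ENNReal.ofReal_pow (by norm_num)]
        gcongr
        norm_num
    _ ≤ _ := hcover
    _ = _ := by rw [add_assoc, hrest]

theorem encard_setOf_mem_packingGap_le (h : IsUnitBallPacking o) (x : E3) :
    {i | x ∈ packingGap o i}.encard ≤ 8 := by
  refine (Set.encard_mono fun i hi => ?_).trans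
    (h.encard_setOf_dist_le_le x (R := 101 / 100) (n := 8) (by norm_num) (by norm_num))
  exact (dist_comm _ _).trans_le (mem_closedBall.mp hi.1)

theorem card_mul_le_of_closedBall_subset_cube (h : IsUnitBallPacking o) {L : ℝ}
    (hcube : ∀ i, closedBall (o i) 1 ⊆ cube L) :
    ENat.card ι * ((8 + ENNReal.ofReal (1 / 500)) * ENNReal.ofReal (π * 4 / 3)) ≤
      8 * ENNReal.ofReal (L + 1 / 50) ^ 3 := by
  set κ := ENNReal.ofReal (π * 4 / 3)
  have hgaps : ENat.card ι * (ENNReal.ofReal (1 / 500) * κ) ≤ 8 * volume (⋃ i, packingGap o i) :=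
    calc _ = ∑' _ : ι, ENNReal.ofReal (1 / 500) * κ := (ENNReal.tsum_const _).symm
      _ ≤ ∑' i, volume (packingGap o i) := ENNReal.tsum_le_tsum h.le_volume_packingGap
      _ ≤ 8 * volume (⋃ i, packingGap o i) :=
        tsum_measure_le_mul_measure_iUnion
          (fun _ => measurableSet_closedBall.diff (.iUnion fun _ => measurableSet_closedBall))
          (fun x => by exact_mod_cast h.encard_setOf_mem_packingGap_le x)
  have hballs : ENat.card ι * κ ≤ volume (⋃ i, ball (o i) 1) := by
    rw [← Set.encard_univ]
    exact h.encard_mul_le_volume fun i _ => Set.subset_iUnion (fun i => ball (o i) 1) i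
  have hdisj : Disjoint (⋃ i, packingGap o i) (⋃ i, ball (o i) 1) :=
    Set.disjoint_iUnion_left.mpr fun i => Set.disjoint_iUnion_right.mpr fun j =>
      Set.disjoint_left.mpr fun x hx hxj =>
        hx.2 (Set.mem_iUnion_of_mem j (ball_subset_closedBall hxj))
  have hsub : (⋃ i, packingGap o i) ∪ (⋃ i, ball (o i) 1) ⊆ cube (L + 1 / 50) := by
    refine Set.union_subset (Set.iUnion_subset fun i => ?_) (Set.iUnion_subset fun i => ?_)
    · have hcenter := mem_cube_of_closedBall_subset zero_le_one (hcube i)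
      exact Set.sdiff_subset.trans
        ((closedBall_subset_cube hcenter).trans (cube_mono (by linarith)))
    · exact ball_subset_closedBall.trans ((hcube i).trans (cube_mono (by norm_num)))
  calc _ = 8 * (ENat.card ι * κ) + ENat.card ι * (ENNReal.ofReal (1 / 500) * κ) := by ring
    _ ≤ 8 * volume (⋃ i, ball (o i) 1) + 8 * volume (⋃ i, packingGap o i) := by
        gcongr
    _ = 8 * volume ((⋃ i, packingGap o i) ∪ (⋃ i, ball (o i) 1)) := by
        rw [measure_union hdisj (.iUnion fun _ => measurableSet_ball)]
        ring
    _ ≤ 8 * volume (cube (L + 1 / 50)) := by gcongr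
    _ = _ := by rw [volume_cube]

end IsUnitBallPacking

def ballDensity (T : NormalTiling) (L : ℝ) : ℝ :=
  4 * Real.pi / 3 * ballCount T L / L ^ 3

namespace NormalTiling

variable (T : NormalTiling)

theorem isUnitBallPacking : IsUnitBallPacking T.o := by
  intro i j hij
  by_contra! hlt
  have hball (k : ℕ) : ball (T.o k) 1 ⊆ interior (T.P k) :=
    interior_maximal (ball_subset_closedBall.trans (T.ball_subset k)) isOpen_ball
  have hmid_i : midpoint ℝ (T.o i) (T.o j) ∈ ball (T.o i) 1 := by
    rw [mem_ball, dist_midpoint_left, Real.norm_two]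
    linarith
  have hmid_j : midpoint ℝ (T.o i) (T.o j) ∈ ball (T.o j) 1 := by
    rw [mem_ball, dist_midpoint_right, Real.norm_two]
    linarith
  exact Set.disjoint_left.mp (T.disjoint_interiors i j hij) (hball i hmid_i) (hball j hmid_j)

theorem exists_pos_diam_le : ∃ D > 0, ∀ i, diam (T.P i) ≤ D := by
  obtain ⟨D, hD⟩ := T.bounded_diam
  exact ⟨max D 1, by positivity, fun i => (hD i).trans (le_max_left _ _)⟩

theorem subset_closedBall {D : ℝ} (hdiam : ∀ i, diam (T.P i) ≤ D) (i : ℕ) :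
    T.P i ⊆ closedBall (T.o i) D := fun _ hx =>
  (dist_le_diam_of_mem (T.isCompact i).isBounded hx
    (T.ball_subset i (mem_closedBall_self zero_le_one))).trans (hdiam i)

theorem cube_subset_biUnion {D : ℝ} (hdiam : ∀ i, diam (T.P i) ≤ D) (L : ℝ) :
    cube (L - 2 * (D + 1)) ⊆ ⋃ i ∈ {i | closedBall (T.o i) 1 ⊆ cube L}, T.P i := by
  intro x hx
  obtain ⟨i, hxi⟩ := Set.mem_iUnion.mp (T.iUnion_eq ▸ Set.mem_univ x)
  refine Set.mem_biUnion (x := i) ?_ hxi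
  calc closedBall (T.o i) 1 ⊆ closedBall x (D + 1) := by
        refine closedBall_subset_closedBall' ?_
        rw [dist_comm]
        linarith [mem_closedBall.mp (T.subset_closedBall hdiam i hxi)]
    _ ⊆ cube (L - 2 * (D + 1) + 2 * (D + 1)) := closedBall_subset_cube hx
    _ = cube L := by ring_nf

theorem finite_setOf_closedBall_subset_cube (L : ℝ) :
    {i | closedBall (T.o i) 1 ⊆ cube L}.Finite := by
  have hvol := T.isUnitBallPacking.encard_mul_le_volume
    (A := {i | closedBall (T.o i) 1 ⊆ cube L}) fun _ hi => ball_subset_closedBall.trans hi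
  rw [volume_cube] at hvol
  have hlt := ENNReal.lt_top_of_mul_ne_top_left (ne_top_of_le_ne_top (by finiteness) hvol)
    (by simp [Real.pi_pos])
  exact Set.encard_lt_top_iff.mp (by exact_mod_cast hlt)

theorem encard_eq_ballCount (L : ℝ) :
    {i | closedBall (T.o i) 1 ⊆ cube L}.encard = ballCount T L := by
  rw [ballCount, Nat.card_coe_set_eq, (T.finite_setOf_closedBall_subset_cube L).cast_ncard_eq]

theorem pow_le_ballCount_mul {D : ℝ} (hdiam : ∀ i, diam (T.P i) ≤ D) {L : ℝ}
    (hL : 2 * (D + 1) ≤ L) : (L - 2 * (D + 1)) ^ 3 ≤ ballCount T L * (D ^ 3 * (π * 4 / 3)) := by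
  have hD : 0 ≤ D := diam_nonneg.trans (hdiam 0)
  set S := {i | closedBall (T.o i) 1 ⊆ cube L}
  have hvol : ENNReal.ofReal (L - 2 * (D + 1)) ^ 3 ≤
      S.encard * (ENNReal.ofReal D ^ 3 * ENNReal.ofReal (π * 4 / 3)) :=
    calc _ = volume (cube (L - 2 * (D + 1))) := (volume_cube _).symm
      _ ≤ volume (⋃ i ∈ S, T.P i) := measure_mono (T.cube_subset_biUnion hdiam L)
      _ ≤ ∑' i : S, volume (T.P i) := measure_biUnion_le _ S.to_countable _
      _ ≤ ∑' i : S, volume (closedBall (T.o i) D) :=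
          ENNReal.tsum_le_tsum fun i => measure_mono (T.subset_closedBall hdiam i)
      _ = _ := by simp only [EuclideanSpace.volume_closedBall_fin_three, ENNReal.tsum_set_const]
  rwa [T.encard_eq_ballCount, ENat.toENNReal_coe, ← ENNReal.ofReal_pow (by linarith),
    ← ENNReal.ofReal_pow hD, ← ENNReal.ofReal_mul (by positivity), ← ENNReal.ofReal_natCast,
    ← ENNReal.ofReal_mul (by positivity), ENNReal.ofReal_le_ofReal_iff (by positivity)] at hvol

theorem ballCount_mul_le {L : ℝ} (hL : 0 ≤ L) :
    ballCount T L * ((8 + 1 / 500) * (π * 4 / 3)) ≤ 8 * (L + 1 / 50) ^ 3 := by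
  set S := {i | closedBall (T.o i) 1 ⊆ cube L}
  have hcount := (T.isUnitBallPacking.comp_injective (f := ((↑) : S → ℕ))
    Subtype.val_injective).card_mul_le_of_closedBall_subset_cube fun i => i.2
  change (S.encard : ℝ≥0∞) * _ ≤ _ at hcount
  rwa [T.encard_eq_ballCount, ENat.toENNReal_coe, ← ENNReal.ofReal_ofNat 8,
    ← ENNReal.ofReal_add (by norm_num) (by norm_num), ← ENNReal.ofReal_mul (by norm_num),
    ← ENNReal.ofReal_natCast, ← ENNReal.ofReal_mul (by positivity),
    ← ENNReal.ofReal_pow (by linarith), ← ENNReal.ofReal_mul (by norm_num),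
    ENNReal.ofReal_le_ofReal_iff (by positivity)] at hcount

theorem one_div_le_ballDensity {D : ℝ} (hdiam : ∀ i, diam (T.P i) ≤ D) (hD : 0 < D) {L : ℝ}
    (hL : 4 * D + 4 ≤ L) : 1 / (8 * D ^ 3) ≤ ballDensity T L := by
  have hcount := T.pow_le_ballCount_mul hdiam (L := L) (by linarith)
  have hhalf : (L / 2) ^ 3 ≤ (L - 2 * (D + 1)) ^ 3 :=
    pow_le_pow_left₀ (by linarith) (by linarith) 3
  have hL0 : 0 < L := by linarith
  rw [ballDensity, div_le_div_iff₀ (by positivity) (by positivity)]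
  nlinarith

theorem ballDensity_le {L : ℝ} (hL : 1000 ≤ L) : ballDensity T L ≤ 9999 / 10000 := by
  have hcount := T.ballCount_mul_le (L := L) (by linarith)
  have hcube : (L + 1 / 50) ^ 3 ≤ (1 + 1 / 10000) * L ^ 3 := by
    nlinarith [mul_nonneg (mul_nonneg (sub_nonneg.mpr hL) (by linarith : (0 : ℝ) ≤ L))
      (by linarith : (0 : ℝ) ≤ L)]
  rw [ballDensity, div_le_iff₀ (by positivity)]
  nlinarith [Real.pi_pos, (Nat.cast_nonneg _ : (0 : ℝ) ≤ ballCount T L)]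

end NormalTiling

/-- For a normal tiling,
`0 < liminf (4π/3)·card{i : Bᵢ ⊆ C_L}/L³ ≤ limsup (4π/3)·card{i : Bᵢ ⊆ C_L}/L³ < 1`. -/
theorem density_liminf_pos_limsup_lt_one (T : NormalTiling) :
    0 < liminf (fun L : ℝ => (4 * Real.pi / 3) * (ballCount T L : ℝ) / L ^ 3) atTop ∧
    liminf (fun L : ℝ => (4 * Real.pi / 3) * (ballCount T L : ℝ) / L ^ 3) atTop ≤
      limsup (fun L : ℝ => (4 * Real.pi / 3) * (ballCount T L : ℝ) / L ^ 3) atTop ∧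
    limsup (fun L : ℝ => (4 * Real.pi / 3) * (ballCount T L : ℝ) / L ^ 3) atTop < 1 := by
  change 0 < liminf (ballDensity T) atTop ∧ liminf (ballDensity T) atTop ≤
    limsup (ballDensity T) atTop ∧ limsup (ballDensity T) atTop < 1
  obtain ⟨D, hD, hdiam⟩ := T.exists_pos_diam_le
  have hlower : ∀ᶠ L in atTop, 1 / (8 * D ^ 3) ≤ ballDensity T L :=
    eventually_atTop.mpr ⟨4 * D + 4, fun _ => T.one_div_le_ballDensity hdiam hD⟩
  have hupper : ∀ᶠ L in atTop, ballDensity T L ≤ 9999 / 10000 :=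
    eventually_atTop.mpr ⟨1000, fun _ => T.ballDensity_le⟩
  have hbdd_above : IsBoundedUnder (· ≤ ·) atTop (ballDensity T) :=
    isBoundedUnder_of_eventually_le hupper
  have hbdd_below : IsBoundedUnder (· ≥ ·) atTop (ballDensity T) :=
    isBoundedUnder_of_eventually_ge hlower
  refine ⟨?_, liminf_le_limsup hbdd_above hbdd_below, ?_⟩
  · exact (by positivity : (0 : ℝ) < 1 / (8 * D ^ 3)).trans_le
      (le_liminf_of_le hbdd_above.isCoboundedUnder_ge hlower)
  · exact (limsup_le_of_le hbdd_below.isCoboundedUnder_le hupper).trans_lt (by norm_num)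
end
end
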